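/- arXiv:1605.00410 — 9 statements merged into one kernel-verified Lean document; each statement's English description precedes it below -/
import Mathlib

section
/- Let P be a real polynomial of degree n ≥ 1, let a < b be real numbers, and let k be an integer with 1 ≤ k ≤ n. Let q_0, …, q_n denote the coefficients of Q(x) := P(a + (b−a)·x), so that q_i = P^{(i)}(a)·(b−a)^i / i!. For each ξ ∈ [a,b], define the polynomial F_ξ(x) := Σ_{i=0}^{k−1} q_i·x^i + (P^{(k)}(ξ)·(b−a)^k / k!)·x^k, and let G_ξ be the polynomial G_ξ(X) := Σ_{i=0}^{k−1} q_i·(X+1)^{k−i} + P^{(k)}(ξ)·(b−a)^k / k!, i.e. G_ξ(X) = (X+1)^k·F_ξ(1/(X+1)). If for every ξ ∈ [a,b] the polynomial G_ξ is nonzero and all of its nonzero coefficients have the same sign, then P has no root in the open interval (a,b). -/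
/-!
Suppose `P x = 0` with `a < x < b`, and put `t = (x - a) / (b - a) ∈ (0, 1)`. Taylor's theorem with
Lagrange remainder of order `k` at `a` gives some `ξ ∈ [a, x]` with
`0 = P x = ∑_{i<k} q_i t^i + P^{(k)}(ξ) (b - a)^k / k! · t^k = t^k · G_ξ(1/t - 1)`.
So `G_ξ` vanishes at the positive point `1/t - 1`, which is impossible for a nonzero polynomial whose
coefficients all have the same sign.
-/

open Polynomial Finset
open scoped Nat

namespace Polynomial

theorem deriv_eval_eq {𝕜 : Type*} [NontriviallyNormedField 𝕜] (P : 𝕜[X]) :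
    deriv (fun x => P.eval x) = fun x => (derivative P).eval x := by
  ext
  exact P.deriv

theorem iteratedDeriv_eval {𝕜 : Type*} [NontriviallyNormedField 𝕜] (P : 𝕜[X]) (m : ℕ) :
    iteratedDeriv m (fun x => P.eval x) = fun x => (derivative^[m] P).eval x := by
  induction m generalizing P with
  | zero => simp
  | succ m ih => rw [iteratedDeriv_succ', P.deriv_eval_eq, ih, Function.iterate_succ_apply]

theorem contDiff_eval {𝕜 : Type*} [NontriviallyNormedField 𝕜] (P : 𝕜[X]) (n : WithTop ℕ∞) :
    ContDiff 𝕜 n fun x => P.eval x := by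
  simpa using P.contDiff_aeval (𝕜 := 𝕜) n

theorem exists_eval_eq_taylor_add_lagrange (P : ℝ[X]) {a x : ℝ} (hax : a < x) (k : ℕ) :
    ∃ ξ ∈ Set.Icc a x, P.eval x = ∑ i ∈ range k, (derivative^[i] P).eval a * (x - a) ^ i / i ! +
      (derivative^[k] P).eval ξ * (x - a) ^ k / k ! := by
  cases k with
  | zero => exact ⟨x, Set.right_mem_Icc.2 hax.le, by simp⟩
  | succ m =>
    obtain ⟨ξ, hξ, h⟩ := taylor_mean_remainder_lagrange_iteratedDeriv (n := m) hax.ne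
      (P.contDiff_eval _).contDiffOn
    rw [Set.uIoo_of_le hax.le] at hξ
    refine ⟨ξ, Set.Ioo_subset_Icc_self hξ, ?_⟩
    have hcoeff (i : ℕ) : iteratedDerivWithin i (fun x => P.eval x) (Set.uIcc a x) a =
        (derivative^[i] P).eval a := by
      rw [iteratedDerivWithin_eq_iteratedDeriv (uniqueDiffOn_uIcc hax.ne)
        (P.contDiff_eval _).contDiffAt Set.left_mem_uIcc, P.iteratedDeriv_eval]
    simp only [taylor_within_apply, hcoeff, P.iteratedDeriv_eval, smul_eq_mul] at h
    have hsum : ∑ i ∈ range (m + 1), (derivative^[i] P).eval a * (x - a) ^ i / i ! =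
        ∑ i ∈ range (m + 1), ((i ! : ℝ)⁻¹ * (x - a) ^ i) * (derivative^[i] P).eval a :=
      sum_congr rfl fun i _ => by ring
    linarith

theorem eval_pos_of_coeff_nonneg {R : Type*} [Semiring R] [PartialOrder R] [IsStrictOrderedRing R]
    {p : R[X]} (hp : p ≠ 0) (hc : ∀ j, 0 ≤ p.coeff j) {y : R} (hy : 0 < y) : 0 < p.eval y := by
  rw [eval_eq_sum_range]
  refine sum_pos' (fun i _ => mul_nonneg (hc i) (pow_nonneg hy.le i))
    ⟨p.natDegree, self_mem_range_succ _, mul_pos ?_ (pow_pos hy _)⟩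
  exact (hc _).lt_of_ne' (leadingCoeff_ne_zero.2 hp)

theorem eval_ne_zero_of_coeff_nonneg_or_nonpos {R : Type*} [Ring R] [PartialOrder R]
    [IsStrictOrderedRing R] {p : R[X]} (hp : p ≠ 0)
    (hc : (∀ j, 0 ≤ p.coeff j) ∨ ∀ j, p.coeff j ≤ 0) {y : R} (hy : 0 < y) : p.eval y ≠ 0 := by
  rcases hc with hc | hc
  · exact (eval_pos_of_coeff_nonneg hp hc hy).ne'
  · have := eval_pos_of_coeff_nonneg (neg_ne_zero.2 hp) (fun j => by simpa using hc j) hy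
    rw [eval_neg] at this
    exact (neg_pos.1 this).ne

theorem eval_inv_sub_one_mul_pow {K : Type*} [Field K] (c : ℕ → K) (d : K) {t : K} (ht : t ≠ 0)
    (k : ℕ) : (∑ i ∈ range k, C (c i) * (X + 1) ^ (k - i) + C d).eval (t⁻¹ - 1) * t ^ k =
      ∑ i ∈ range k, c i * t ^ i + d * t ^ k := by
  simp only [eval_add, eval_finsetSum, eval_mul, eval_C, eval_pow, eval_X, eval_one,
    sub_add_cancel, add_mul, sum_mul]
  congr 1
  refine sum_congr rfl fun i hi => ?_
  rw [inv_pow, pow_sub₀ _ ht (mem_range.1 hi).le]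
  field_simp

end Polynomial

theorem truncated_taylor_exclusion_general
    (P : Polynomial ℝ)
    (a b : ℝ) (hab : a < b) (k : ℕ)
    (q : ℕ → ℝ)
    (hq : ∀ i, q i = (derivative^[i] P).eval a * (b - a) ^ i / (Nat.factorial i))
    (G : ℝ → Polynomial ℝ)
    (hG : ∀ ξ : ℝ, G ξ =
      (∑ i ∈ Finset.range k, C (q i) * (X + 1) ^ (k - i))
        + C ((derivative^[k] P).eval ξ * (b - a) ^ k / (Nat.factorial k)))
    (hsign : ∀ ξ ∈ Set.Icc a b, G ξ ≠ 0 ∧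
      ((∀ j, 0 ≤ (G ξ).coeff j) ∨ (∀ j, (G ξ).coeff j ≤ 0))) :
    ∀ x ∈ Set.Ioo a b, P.eval x ≠ 0 := by
  rintro x ⟨hax, hxb⟩ hPx
  obtain ⟨ξ, ⟨haξ, hξx⟩, htaylor⟩ := P.exists_eval_eq_taylor_add_lagrange hax k
  set t := (x - a) / (b - a)
  have ht : 0 < t := div_pos (sub_pos.2 hax) (sub_pos.2 hab)
  have ht1 : t < 1 := (div_lt_one (sub_pos.2 hab)).2 (by linarith)
  have hxa : x - a = (b - a) * t := (mul_div_cancel₀ _ (sub_pos.2 hab).ne').symm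
  have hroot : (G ξ).eval (t⁻¹ - 1) * t ^ k = 0 := by
    rw [hG, eval_inv_sub_one_mul_pow _ _ ht.ne', ← hPx, htaylor, hxa]
    simp only [hq, mul_pow]
    congr 1
    · exact sum_congr rfl fun i _ => by ring
    · ring
  obtain ⟨hGne, hGsign⟩ := hsign ξ ⟨haξ, hξx.trans hxb.le⟩
  exact eval_ne_zero_of_coeff_nonneg_or_nonpos hGne hGsign (sub_pos.2 ((one_lt_inv₀ ht).2 ht1))
    ((mul_eq_zero.1 hroot).resolve_right (pow_ne_zero k ht.ne'))

/-- Root exclusion via the truncated Taylor expansion (degree truncation):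
if for every `ξ ∈ [a,b]` the transformed truncated polynomial `G_ξ` is nonzero and
all of its nonzero coefficients have the same sign, then `P` has no root in `(a,b)`. -/
theorem truncated_taylor_exclusion
    (P : Polynomial ℝ) (n : ℕ) (hn : P.natDegree = n) (hn1 : 1 ≤ n)
    (a b : ℝ) (hab : a < b) (k : ℕ) (hk1 : 1 ≤ k) (hkn : k ≤ n)
    (q : ℕ → ℝ)
    (hq : ∀ i, q i = (derivative^[i] P).eval a * (b - a) ^ i / (Nat.factorial i))
    (G : ℝ → Polynomial ℝ)
    (hG : ∀ ξ : ℝ, G ξ =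
      (∑ i ∈ Finset.range k, C (q i) * (X + 1) ^ (k - i))
        + C ((derivative^[k] P).eval ξ * (b - a) ^ k / (Nat.factorial k)))
    (hsign : ∀ ξ ∈ Set.Icc a b, G ξ ≠ 0 ∧
      ((∀ j, 0 ≤ (G ξ).coeff j) ∨ (∀ j, (G ξ).coeff j ≤ 0))) :
    ∀ x ∈ Set.Ioo a b, P.eval x ≠ 0 :=
  truncated_taylor_exclusion_general P a b hab k q hq G hG hsign
end

section
/- Let P be a real polynomial of degree n ≥ 1, let a < b be real numbers, and let k be an integer with 2 ≤ k ≤ n. Let q_0, …, q_n denote the coefficients of Q(x) := P(a + (b−a)·x), so that q_i = P^{(i)}(a)·(b−a)^i / i!. For each ξ ∈ [a,b], define D_ξ(x) := Σ_{i=1}^{k−1} i·q_i·x^{i−1} + (P^{(k)}(ξ)·(b−a)^k / (k−1)!)·x^{k−1}, and let H_ξ be the polynomial H_ξ(X) := Σ_{i=1}^{k−1} i·q_i·(X+1)^{(k−1)−(i−1)} + P^{(k)}(ξ)·(b−a)^k/(k−1)!, i.e. H_ξ(X) = (X+1)^{k−1}·D_ξ(1/(X+1)). Assume: (i) P(a)·P(b)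 < 0, and (ii) for every ξ ∈ [a,b] the polynomial H_ξ is nonzero and all of its nonzero coefficients have the same sign. Then P has exactly one root in the open interval (a,b), and this root is simple, i.e. P′ does not vanish at it. -/
open Polynomial

private lemma polyContDiff (p : Polynomial ℝ) : ContDiff ℝ ⊤ (fun y => p.eval y) := by
  induction p using Polynomial.induction_on' with
  | add p q hp hq => simpa using hp.add hq
  | monomial n c =>
      simpa [Polynomial.eval_monomial] using (contDiff_const (c := c)).mul (contDiff_id.pow n)

private lemma iterDerivWithinPoly {s : Set ℝ} (hs : UniqueDiffOn ℝ s) :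
    ∀ (i : ℕ) (p : Polynomial ℝ), ∀ x ∈ s,
      iteratedDerivWithin i (fun y => p.eval y) s x = (derivative^[i] p).eval x := by
  intro i
  induction i with
  | zero => intro p x hx; simp
  | succ i ih =>
      intro p x hx
      rw [iteratedDerivWithin_succ']
      have h1 : Set.EqOn (derivWithin (fun y => p.eval y) s)
          (fun y => (derivative p).eval y) s := by
        intro y hy
        rw [(p.differentiableAt).derivWithin (hs y hy), Polynomial.deriv]
      rw [iteratedDerivWithin_congr h1 hx, ih (derivative p) x hx,
        ← Function.iterate_succ_apply]

private lemma evalPosOfCoeffNonneg {p : Polynomial ℝ} (hp : p ≠ 0)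
    (h : ∀ j, 0 ≤ p.coeff j) {x : ℝ} (hx : 0 < x) : 0 < p.eval x := by
  rw [Polynomial.eval_eq_sum_range]
  apply Finset.sum_pos'
  · exact fun j _ => mul_nonneg (h j) (pow_nonneg hx.le j)
  · refine ⟨p.natDegree, Finset.self_mem_range_succ _, ?_⟩
    have hne : p.coeff p.natDegree ≠ 0 := Polynomial.leadingCoeff_ne_zero.mpr hp
    exact mul_pos (lt_of_le_of_ne (h _) (Ne.symm hne)) (pow_pos hx _)


/-- Root inclusion via the truncated Taylor expansion: if `P(a)·P(b) < 0` and for every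
`ξ ∈ [a,b]` the transformed truncated derivative `H_ξ` is nonzero with all nonzero
coefficients of the same sign, then `P` has exactly one root in `(a,b)`, and it is simple. -/
theorem truncated_taylor_inclusion
    (P : Polynomial ℝ) (n : ℕ) (hn : P.natDegree = n) (hn1 : 1 ≤ n)
    (a b : ℝ) (hab : a < b) (k : ℕ) (hk2 : 2 ≤ k) (hkn : k ≤ n)
    (q : ℕ → ℝ)
    (hq : ∀ i, q i = (derivative^[i] P).eval a * (b - a) ^ i / (Nat.factorial i))
    (H : ℝ → Polynomial ℝ)
    (hH : ∀ ξ : ℝ, H ξ =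
      (∑ i ∈ Finset.Ico 1 k, C ((i : ℝ) * q i) * (X + 1) ^ ((k - 1) - (i - 1)))
        + C ((derivative^[k] P).eval ξ * (b - a) ^ k / (Nat.factorial (k - 1))))
    (hab_sign : P.eval a * P.eval b < 0)
    (hsign : ∀ ξ ∈ Set.Icc a b, H ξ ≠ 0 ∧
      ((∀ j, 0 ≤ (H ξ).coeff j) ∨ (∀ j, (H ξ).coeff j ≤ 0))) :
    ∃ x ∈ Set.Ioo a b, P.eval x = 0 ∧ (derivative P).eval x ≠ 0 ∧
      ∀ y ∈ Set.Ioo a b, P.eval y = 0 → y = x := by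
  have hba : (0:ℝ) < b - a := sub_pos.2 hab
  obtain ⟨m, rfl⟩ : ∃ m, k = m + 2 := ⟨k - 2, by omega⟩
  -- Step 1: P' does not vanish on (a,b)
  have key : ∀ x ∈ Set.Ioo a b, (derivative P).eval x ≠ 0 := by
    rintro x ⟨hax, hxb⟩
    have hxa : 0 < x - a := sub_pos.2 hax
    have hUD : UniqueDiffOn ℝ (Set.Icc a x) := uniqueDiffOn_Icc hax
    have hcd : ContDiffOn ℝ (m : ℕ) (fun y => (derivative P).eval y) (Set.Icc a x) :=
      ((polyContDiff (derivative P)).of_le le_top).contDiffOn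
    have hdiff : DifferentiableOn ℝ
        (iteratedDerivWithin m (fun y => (derivative P).eval y) (Set.Icc a x))
        (Set.Ioo a x) := by
      apply DifferentiableOn.congr
        (f := fun y => (derivative^[m] (derivative P)).eval y)
      · exact (Polynomial.differentiable _).differentiableOn
      · exact fun y hy => iterDerivWithinPoly hUD m (derivative P) y (Set.Ioo_subset_Icc_self hy)
    obtain ⟨ξ, hξI, hTay⟩ := taylor_mean_remainder_lagrange (n := m) hax.ne
      (by rwa [Set.uIcc_of_le hax.le]) (by rwa [Set.uIcc_of_le hax.le, Set.uIoo_of_le hax.le])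
    rw [Set.uIcc_of_le hax.le] at hTay
    rw [Set.uIoo_of_le hax.le] at hξI
    simp only [taylor_within_apply, smul_eq_mul] at hTay
    have hrem : iteratedDerivWithin (m + 1) (fun y => (derivative P).eval y) (Set.Icc a x) ξ
        = (derivative^[m + 2] P).eval ξ := by
      rw [iterDerivWithinPoly hUD (m + 1) (derivative P) ξ (Set.Ioo_subset_Icc_self hξI),
        ← Function.iterate_succ_apply]
    have hsum_eq : (∑ j ∈ Finset.range (m + 1), ((Nat.factorial j : ℝ)⁻¹ * (x - a) ^ j) *
          iteratedDerivWithin j (fun y => (derivative P).eval y) (Set.Icc a x) a)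
        = ∑ j ∈ Finset.range (m + 1),
            ((Nat.factorial j : ℝ)⁻¹ * (x - a) ^ j) * (derivative^[j + 1] P).eval a := by
      refine Finset.sum_congr rfl fun j _ => ?_
      rw [iterDerivWithinPoly hUD j (derivative P) a (Set.left_mem_Icc.2 hax.le),
        ← Function.iterate_succ_apply]
    rw [hsum_eq, hrem] at hTay
    have expand : (derivative P).eval x
        = (∑ j ∈ Finset.range (m + 1),
            ((Nat.factorial j : ℝ)⁻¹ * (x - a) ^ j) * (derivative^[j + 1] P).eval a)
          + (derivative^[m + 2] P).eval ξ * (x - a) ^ (m + 1) / (Nat.factorial (m+1) : ℝ) := by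
      linarith [hTay]
    set t : ℝ := (x - a) / (b - a) with ht
    set Xv : ℝ := (b - x) / (x - a) with hXvdef
    have hXv : 0 < Xv := div_pos (sub_pos.2 hxb) hxa
    have hXv1 : Xv + 1 = (b - a) / (x - a) := by
      rw [hXvdef]; field_simp; ring
    have hξab : ξ ∈ Set.Icc a b := ⟨hξI.1.le, (hξI.2.trans hxb).le⟩
    obtain ⟨hHne, hcoef⟩ := hsign ξ hξab
    have hevalne : (H ξ).eval Xv ≠ 0 := by
      rcases hcoef with h | h
      · exact (evalPosOfCoeffNonneg hHne h hXv).ne'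
      · intro h0
        have hpos : 0 < (-(H ξ)).eval Xv :=
          evalPosOfCoeffNonneg (neg_ne_zero.2 hHne)
            (fun j => by simp only [Polynomial.coeff_neg]; linarith [h j]) hXv
        rw [Polynomial.eval_neg, h0] at hpos
        norm_num at hpos
    have hkey : (H ξ).eval Xv * t ^ (m + 1) = (b - a) * (derivative P).eval x := by
      rw [hH ξ]
      simp only [Polynomial.eval_add, Polynomial.eval_finset_sum, Polynomial.eval_mul,
        Polynomial.eval_C, Polynomial.eval_pow, Polynomial.eval_X, Polynomial.eval_one]
      rw [Finset.sum_Ico_eq_sum_range]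
      have h21 : m + 2 - 1 = m + 1 := rfl
      rw [expand, mul_add, Finset.mul_sum, add_mul, Finset.sum_mul]
      congr 1
      · refine Finset.sum_congr rfl fun j hj => ?_
        simp only [Finset.mem_range] at hj
        have hde : m + 2 - 1 - (1 + j - 1) = m + 1 - j := by omega
        obtain ⟨d, hd1, hd2⟩ : ∃ d, m + 1 - j = d ∧ m + 1 = j + d :=
          ⟨m + 1 - j, rfl, by omega⟩
        rw [hde, hd1, hq (1 + j), hXv1, ht, hd2, Nat.add_comm 1 j,
          Nat.factorial_succ, pow_add, div_pow, div_pow]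
        have hfj : ((Nat.factorial j : ℝ)) ≠ 0 := Nat.cast_ne_zero.2 (Nat.factorial_ne_zero _)
        have hxane : (x - a) ≠ 0 := hxa.ne'
        have hbane : (b - a) ≠ 0 := hba.ne'
        push_cast
        field_simp
        ring
      · rw [ht]
        have hxane : (x - a) ≠ 0 := hxa.ne'
        have hbane : (b - a) ≠ 0 := hba.ne'
        have hf : ((Nat.factorial (m+1) : ℝ)) ≠ 0 := Nat.cast_ne_zero.2 (Nat.factorial_ne_zero _)
        rw [h21, div_pow]
        field_simp
        ring
    intro hz
    rw [hz, mul_zero] at hkey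
    rcases mul_eq_zero.mp hkey with h | h
    · exact hevalne h
    · exact pow_ne_zero _ (div_pos hxa hba).ne' h
  -- Step 2: existence of a root
  have hcont : ContinuousOn (fun y => P.eval y) (Set.Icc a b) :=
    (Polynomial.continuous P).continuousOn
  obtain ⟨x, hx, hx0⟩ : ∃ x ∈ Set.Ioo a b, P.eval x = 0 := by
    rcases mul_neg_iff.mp hab_sign with ⟨hpa, hpb⟩ | ⟨hpa, hpb⟩
    · obtain ⟨x, hx, hfx⟩ := intermediate_value_Ioo' hab.le hcont
        (Set.mem_Ioo.2 ⟨hpb, hpa⟩)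
      exact ⟨x, hx, hfx⟩
    · obtain ⟨x, hx, hfx⟩ := intermediate_value_Ioo hab.le hcont
        (Set.mem_Ioo.2 ⟨hpa, hpb⟩)
      exact ⟨x, hx, hfx⟩
  refine ⟨x, hx, hx0, key x hx, ?_⟩
  intro y hy hy0
  by_contra hne
  rcases lt_or_gt_of_ne hne with h | h
  · obtain ⟨c, hc, hc0⟩ := exists_deriv_eq_zero h
      ((Polynomial.continuous P).continuousOn) (by rw [hy0, hx0])
    exact key c ⟨lt_trans hy.1 hc.1, lt_trans hc.2 hx.2⟩
      (by rwa [Polynomial.deriv] at hc0)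
  · obtain ⟨c, hc, hc0⟩ := exists_deriv_eq_zero h
      ((Polynomial.continuous P).continuousOn) (by rw [hy0, hx0])
    exact key c ⟨lt_trans hx.1 hc.1, lt_trans hc.2 hy.2⟩
      (by rwa [Polynomial.deriv] at hc0)
end

section
/- Let P be a real polynomial of degree n ≥ 1, let s, t ∈ ℝ, let d > 0 and D ≥ 0 be real numbers such that |t − z| ≥ d for every complex root z of P and |s − t| ≤ D. Then |P(s)| ≤ (1 + D/d)^n · |P(t)|. -/
/-!
Over `ℂ`, `|P(x)|` is `|lc P|` times the product of the distances from `x` to the roots. Since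
`t` is at distance `≥ d` from each root `z`, the triangle inequality gives
`|s - z| ≤ |s - t| + |t - z| ≤ (1 + D / d) |t - z|`, and multiplying over the `deg P` roots
gives the bound.
-/

open Polynomial

theorem dist_le_one_add_div_mul_dist {X : Type*} [PseudoMetricSpace X] {x y a : X} {d D : ℝ}
    (hd : 0 < d) (hxy : dist x y ≤ D) (hya : d ≤ dist y a) :
    dist x a ≤ (1 + D / d) * dist y a := by
  have hD : 0 ≤ D := dist_nonneg.trans hxy
  calc dist x a ≤ dist x y + dist y a := dist_triangle x y a
    _ ≤ D / d * d + dist y a := by rw [div_mul_cancel₀ D hd.ne']; gcongr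
    _ ≤ D / d * dist y a + dist y a := by gcongr
    _ = (1 + D / d) * dist y a := by ring

theorem Polynomial.norm_eval_eq_norm_leadingCoeff_mul_prod_roots {K : Type*} [NormedField K]
    [IsAlgClosed K] (Q : K[X]) (x : K) :
    ‖Q.eval x‖ = ‖Q.leadingCoeff‖ * (Q.roots.map fun a => ‖x - a‖).prod := by
  rw [(IsAlgClosed.splits Q).eval_eq_prod_roots, norm_mul]
  congr 1
  simpa [Multiset.map_map] using map_multiset_prod (normHom : K →*₀ ℝ) (Q.roots.map (x - ·))

theorem Polynomial.norm_eval_le_pow_mul_norm_eval {K : Type*} [NormedField K] [IsAlgClosed K]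
    (Q : K[X]) {x y : K} {c : ℝ} (h : ∀ a ∈ Q.roots, ‖x - a‖ ≤ c * ‖y - a‖) :
    ‖Q.eval x‖ ≤ c ^ Q.natDegree * ‖Q.eval y‖ := by
  have hprod : (Q.roots.map fun a => ‖x - a‖).prod ≤
      c ^ Q.natDegree * (Q.roots.map fun a => ‖y - a‖).prod := by
    calc (Q.roots.map fun a => ‖x - a‖).prod
        ≤ (Q.roots.map fun a => c * ‖y - a‖).prod :=
          Multiset.prod_map_le_prod_map₀ _ _ (fun _ _ => norm_nonneg _) h
      _ = c ^ Q.natDegree * (Q.roots.map fun a => ‖y - a‖).prod := by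
          rw [Multiset.prod_map_mul, Multiset.map_const', Multiset.prod_replicate,
            IsAlgClosed.card_roots_eq_natDegree]
  rw [norm_eval_eq_norm_leadingCoeff_mul_prod_roots, norm_eval_eq_norm_leadingCoeff_mul_prod_roots]
  calc ‖Q.leadingCoeff‖ * (Q.roots.map fun a => ‖x - a‖).prod
      ≤ ‖Q.leadingCoeff‖ * (c ^ Q.natDegree * (Q.roots.map fun a => ‖y - a‖).prod) := by gcongr
    _ = _ := by ring

theorem abs_eval_le_of_dist_to_roots_ge_general
    (P : Polynomial ℝ) (s t : ℝ) (d D : ℝ)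
    (hd : 0 < d)
    (hroots : ∀ z : ℂ, Polynomial.aeval z P = 0 → d ≤ ‖(t : ℂ) - z‖)
    (hst : |s - t| ≤ D) :
    |P.eval s| ≤ (1 + D / d) ^ P.natDegree * |P.eval t| := by
  have hbound : ∀ z ∈ (P.map (algebraMap ℝ ℂ)).roots,
      ‖(s : ℂ) - z‖ ≤ (1 + D / d) * ‖(t : ℂ) - z‖ := by
    intro z hz
    have hPz : aeval z P = 0 := by simpa using isRoot_of_mem_roots hz
    have hst' : dist (s : ℂ) t ≤ D := by
      rwa [dist_eq_norm, ← Complex.ofReal_sub, Complex.norm_real, Real.norm_eq_abs]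
    have htz : d ≤ dist (t : ℂ) z := by rw [dist_eq_norm]; exact hroots z hPz
    simpa only [dist_eq_norm] using dist_le_one_add_div_mul_dist hd hst' htz
  have hnorm (x : ℝ) : ‖(P.map (algebraMap ℝ ℂ)).eval (x : ℂ)‖ = |P.eval x| := by
    rw [← Complex.coe_algebraMap, eval_map, eval₂_at_apply, Complex.coe_algebraMap,
      Complex.norm_real, Real.norm_eq_abs]
  simpa only [hnorm, natDegree_map] using
    (P.map (algebraMap ℝ ℂ)).norm_eval_le_pow_mul_norm_eval hbound

/-- If `t` keeps distance at least `d > 0` from every complex root of the real polynomial `P`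
of degree `n ≥ 1`, and `|s - t| ≤ D`, then `|P(s)| ≤ (1 + D/d)^n · |P(t)|`. -/
theorem abs_eval_le_of_dist_to_roots_ge
    (P : Polynomial ℝ) (hP : 1 ≤ P.natDegree) (s t : ℝ) (d D : ℝ)
    (hd : 0 < d) (hD : 0 ≤ D)
    (hroots : ∀ z : ℂ, Polynomial.aeval z P = 0 → d ≤ ‖(t : ℂ) - z‖)
    (hst : |s - t| ≤ D) :
    |P.eval s| ≤ (1 + D / d) ^ P.natDegree * |P.eval t| :=
  abs_eval_le_of_dist_to_roots_ge_general P s t d D hd hroots hst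
end

section
/- Let P be a nonzero real polynomial with at most n distinct complex roots (e.g. a nonzero polynomial of degree at most n), let N ≥ n be an integer, let m ∈ ℝ and ε > 0. Then there exists an integer i with |i| ≤ ⌈N/2⌉ such that the point m_i := m + i·ε satisfies |m_i − z| ≥ ε/2 for every complex root z of P. In particular, max_{|i| ≤ ⌈N/2⌉} |P(m_i)| > 0. -/
/-!
A grid point `m + i ε` within `ε/2` of a root `z` must have `i = round ((Re z - m) / ε)`, since
`|Re (m + i ε - z)| ≤ ‖m + i ε - z‖`. So the at most `n ≤ N` roots exclude at most `N` of the
`2⌈N/2⌉ + 1` indices, and any remaining index works.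
-/

open Polynomial Finset

lemma round_div_sub_eq_of_abs_lt {m ε x : ℝ} {i : ℤ} (hε : 0 < ε) (h : |m + i * ε - x| < ε / 2) :
    round ((x - m) / ε) = i := by
  rw [round_eq_iff, Set.mem_Ico, le_div_iff₀ hε, div_lt_iff₀ hε]
  rw [abs_lt] at h
  constructor <;> linarith

lemma exists_grid_point_forall_le_abs_sub {m ε : ℝ} (hε : 0 < ε) {S : Finset ℝ} {I : Finset ℤ}
    (hSI : #S < #I) : ∃ i ∈ I, ∀ x ∈ S, ε / 2 ≤ |m + i * ε - x| := by
  have hcard : #(S.image fun x => round ((x - m) / ε)) < #I := card_image_le.trans_lt hSI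
  obtain ⟨i, hiI, hi⟩ := exists_mem_notMem_of_card_lt_card hcard
  refine ⟨i, hiI, fun x hx => not_lt.mp fun hlt => hi ?_⟩
  exact mem_image.mpr ⟨x, hx, round_div_sub_eq_of_abs_lt hε hlt⟩

lemma lt_card_Icc_neg_ceil_half (N : ℕ) : N < #(Icc (-⌈(N : ℚ) / 2⌉) ⌈(N : ℚ) / 2⌉) := by
  have hN : (N : ℚ) / 2 ≤ ⌈(N : ℚ) / 2⌉ := Int.le_ceil _
  have hN' : (N : ℤ) ≤ 2 * ⌈(N : ℚ) / 2⌉ := by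
    exact_mod_cast (by linarith : (N : ℚ) ≤ 2 * ⌈(N : ℚ) / 2⌉)
  rw [Int.card_Icc]
  omega

/-- The multipoint `m[ε; N]` contains a point whose distance to every complex root of `P`
is at least `ε/2`; in particular `P` does not vanish at this point. -/
theorem exists_admissible_grid_point
    (P : Polynomial ℝ) (hP : P ≠ 0) (n : ℕ) (hdeg : P.natDegree ≤ n)
    (N : ℕ) (hN : n ≤ N) (m ε : ℝ) (hε : 0 < ε) :
    ∃ i : ℤ, |i| ≤ ⌈(N : ℚ) / 2⌉ ∧
      (∀ z : ℂ, Polynomial.aeval z P = 0 →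
        ε / 2 ≤ ‖(↑(m + i * ε) : ℂ) - z‖) ∧
      P.eval (m + i * ε) ≠ 0 := by
  set K : ℤ := ⌈(N : ℚ) / 2⌉
  set S : Finset ℝ := (P.aroots ℂ).toFinset.image Complex.re
  have hS : #S < #(Icc (-K) K) := calc
    #S ≤ #(P.aroots ℂ).toFinset := card_image_le
    _ ≤ Multiset.card (P.aroots ℂ) := Multiset.toFinset_card_le _
    _ = P.natDegree := IsAlgClosed.card_aroots_eq_natDegree
    _ < #(Icc (-K) K) := (hdeg.trans hN).trans_lt (lt_card_Icc_neg_ceil_half N)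
  obtain ⟨i, hiK, hfar⟩ := exists_grid_point_forall_le_abs_sub (m := m) hε hS
  have hfarC : ∀ z : ℂ, aeval z P = 0 → ε / 2 ≤ ‖(↑(m + i * ε) : ℂ) - z‖ := fun z hz => by
    have hzS : z.re ∈ S := mem_image_of_mem _ (Multiset.mem_toFinset.mpr (mem_aroots.mpr ⟨hP, hz⟩))
    calc ε / 2 ≤ |m + i * ε - z.re| := hfar z.re hzS
      _ = |((↑(m + i * ε) : ℂ) - z).re| := by rw [Complex.sub_re, Complex.ofReal_re]
      _ ≤ ‖(↑(m + i * ε) : ℂ) - z‖ := Complex.abs_re_le_norm _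
  refine ⟨i, abs_le.mpr (mem_Icc.mp hiK), hfarC, fun h0 => ?_⟩
  have hroot : aeval ((m + i * ε : ℝ) : ℂ) P = 0 := by
    rw [← Complex.coe_algebraMap, aeval_algebraMap_apply, coe_aeval_eq_eval, h0, map_zero]
  have hself := hfarC _ hroot
  rw [sub_self, norm_zero] at hself
  linarith
end

section
/- Let P be a nonzero real polynomial of degree n ≥ 1, let m ∈ ℝ, ε > 0, and let λ ≥ 1 be an integer. Let M be the set of points m_j := m + j·ε·2^{−λ} for integers j with |j| ≤ ⌈n·2^λ/2⌉, and let m̄ := m + i·ε for some integer i with |i| ≤ ⌈n/2⌉. Then the number of points m_j ∈ M with |P(m_j)| < (1 + (n+1)·2^λ)^{−n} · |P(m̄)| is at most 2n. In particular, since M contains at least n·2^λ + 1 points, at most a fraction 2n/(n·2^λ + 1) of the points of M fail the bound |P(m_j)| ≥ (1 + (n+1)·2^λ)^{−n} · |P(m̄)|. -/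
/-!
Write `δ = ε·2^{-λ}` and `K = (n+1)·2^λ`, so that every point `m̄` of the coarse multipoint is
within `Kδ = (n+1)ε` of every point `m_j = m + jδ` of the refined one. If no complex root of `P`
lies within `δ` of `m_j`, then comparing `P` with its factorisation over `ℂ` root by root gives
`|m̄ - z| ≤ (1 + K)|m_j - z|`, hence `|P(m̄)| ≤ (1 + K)^n |P(m_j)|`. So a bad index `j` has a root
`z` with `|j - (Re z - m)/δ| < 1`, and each of the at most `n` roots accounts for at most two
integers `j`.
-/

open Polynomial

protected theorem Multiset.norm_prod {α : Type*} [SeminormedCommRing α] [NormMulClass α]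
    [NormOneClass α] (s : Multiset α) : ‖s.prod‖ = (s.map norm).prod :=
  map_multiset_prod (normHom.toMonoidHom : α →* ℝ) s

namespace Polynomial

theorem Splits.norm_eval_le_pow_natDegree_mul {K : Type*} [NormedField K] {f : K[X]}
    (hf : f.Splits) {a b : K} {C : ℝ} (h : ∀ z ∈ f.roots, ‖a - z‖ ≤ C * ‖b - z‖) :
    ‖f.eval a‖ ≤ C ^ f.natDegree * ‖f.eval b‖ := by
  simp only [hf.eval_eq_prod_roots, norm_mul, Multiset.norm_prod, Multiset.map_map,
    Function.comp_def]
  calc ‖f.leadingCoeff‖ * (f.roots.map fun z => ‖a - z‖).prod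
      ≤ ‖f.leadingCoeff‖ * (f.roots.map fun z => C * ‖b - z‖).prod := by
        gcongr
        exact Multiset.prod_map_le_prod_map₀ _ _ (fun _ _ => norm_nonneg _) h
    _ = C ^ f.natDegree * (‖f.leadingCoeff‖ * (f.roots.map fun z => ‖b - z‖).prod) := by
        rw [Multiset.prod_map_mul, Multiset.map_const', Multiset.prod_replicate,
          ← hf.natDegree_eq_card_roots]
        ring

theorem abs_eval_le_of_le_norm_sub_aroots (P : ℝ[X]) {a b δ K : ℝ} (hK : 0 ≤ K)
    (hab : |a - b| ≤ K * δ) (hfar : ∀ z ∈ P.aroots ℂ, δ ≤ ‖(b : ℂ) - z‖) :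
    |P.eval a| ≤ (1 + K) ^ P.natDegree * |P.eval b| := by
  have habs_eval (x : ℝ) : |P.eval x| = ‖(P.map (algebraMap ℝ ℂ)).eval (x : ℂ)‖ := by
    rw [eval_map_algebraMap, ← Complex.coe_algebraMap, aeval_algebraMap_apply_eq_algebraMap_eval,
      Complex.coe_algebraMap, Complex.norm_real, Real.norm_eq_abs]
  rw [habs_eval, habs_eval, ← natDegree_map (algebraMap ℝ ℂ)]
  refine (IsAlgClosed.splits _).norm_eval_le_pow_natDegree_mul fun z hz => ?_
  calc ‖(a : ℂ) - z‖ ≤ ‖(a : ℂ) - b‖ + ‖(b : ℂ) - z‖ := norm_sub_le_norm_sub_add_norm_sub _ _ _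
    _ ≤ K * ‖(b : ℂ) - z‖ + ‖(b : ℂ) - z‖ := by
        rw [← Complex.ofReal_sub, Complex.norm_real, Real.norm_eq_abs]
        gcongr
        exact hab.trans (by gcongr; exact hfar z hz)
    _ = (1 + K) * ‖(b : ℂ) - z‖ := by ring

end Polynomial

theorem Int.setOf_abs_sub_lt_one_subset (t : ℝ) :
    {j : ℤ | |(j : ℝ) - t| < 1} ⊆ {⌈t⌉ - 1, ⌈t⌉} := by
  intro j (hj : |(j : ℝ) - t| < 1)
  obtain ⟨hlo, hhi⟩ := abs_lt.mp hj
  have h₁ : j - 1 < ⌈t⌉ := Int.lt_ceil.mpr (by push_cast; linarith)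
  have h₂ : ⌈t⌉ ≤ j + 1 := Int.ceil_le.mpr (by push_cast; linarith)
  simp only [Set.mem_insert_iff, Set.mem_singleton_iff]
  omega

section NearIntegers

variable {ι : Type*} (s : Finset ι) (t : ι → ℝ)

theorem finite_setOf_exists_abs_sub_lt_one :
    {j : ℤ | ∃ z ∈ s, |(j : ℝ) - t z| < 1}.Finite := by
  refine (s.finite_toSet.biUnion fun z _ => (Set.toFinite {⌈t z⌉ - 1, ⌈t z⌉}).subset
    (Int.setOf_abs_sub_lt_one_subset (t z))).subset ?_
  intro j
  simp

theorem ncard_setOf_exists_abs_sub_lt_one_le :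
    {j : ℤ | ∃ z ∈ s, |(j : ℝ) - t z| < 1}.ncard ≤ 2 * s.card := by
  have hunion : {j : ℤ | ∃ z ∈ s, |(j : ℝ) - t z| < 1} =
      ⋃ z ∈ s, {j : ℤ | |(j : ℝ) - t z| < 1} := by
    ext j
    simp
  have hpair (z : ι) : {j : ℤ | |(j : ℝ) - t z| < 1}.ncard ≤ 2 :=
    (Set.ncard_le_ncard (Int.setOf_abs_sub_lt_one_subset (t z))).trans
      ((Set.ncard_insert_le _ _).trans (by simp))
  calc _ ≤ ∑ z ∈ s, {j : ℤ | |(j : ℝ) - t z| < 1}.ncard := hunion ▸ s.set_ncard_biUnion_le _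
    _ ≤ ∑ _z ∈ s, 2 := Finset.sum_le_sum fun z _ => hpair z
    _ = 2 * s.card := by rw [Finset.sum_const, smul_eq_mul, mul_comm]

end NearIntegers

theorem abs_sub_div_lt_one_of_norm_sub_lt {m δ : ℝ} (hδ : 0 < δ) {j : ℤ} {z : ℂ}
    (h : ‖((m + j * δ : ℝ) : ℂ) - z‖ < δ) : |(j : ℝ) - (z.re - m) / δ| < 1 := by
  have hre : |m + j * δ - z.re| < δ := by
    simpa using (Complex.abs_re_le_norm _).trans_lt h
  rw [show (j : ℝ) - (z.re - m) / δ = (m + j * δ - z.re) / δ by field_simp; ring, abs_div,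
    abs_of_pos hδ, div_lt_one hδ]
  exact hre

theorem two_mul_abs_le_of_abs_le_ceil_half {k : ℕ} {i : ℤ} (hi : |i| ≤ ⌈(k : ℚ) / 2⌉) :
    2 * |(i : ℝ)| ≤ k + 1 := by
  have hceil : ((⌈(k : ℚ) / 2⌉ : ℤ) : ℚ) < k / 2 + 1 := Int.ceil_lt_add_one _
  have hint : 2 * ⌈(k : ℚ) / 2⌉ < k + 2 := by
    exact_mod_cast (by linarith : (2 * ⌈(k : ℚ) / 2⌉ : ℚ) < k + 2)
  have : 2 * |i| ≤ k + 1 := by omega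
  exact_mod_cast this

theorem abs_add_int_mul_sub_add_int_mul_inv_two_pow_le {n l : ℕ} (m : ℝ) {ε : ℝ} (hε : 0 ≤ ε)
    {i j : ℤ} (hi : |i| ≤ ⌈(n : ℚ) / 2⌉) (hj : |j| ≤ ⌈((n * 2 ^ l : ℕ) : ℚ) / 2⌉) :
    |(m + i * ε) - (m + j * (ε * ((2 : ℝ) ^ l)⁻¹))| ≤ (n + 1) * ε := by
  have hi' := two_mul_abs_le_of_abs_le_ceil_half hi
  have hj' : 2 * |(j : ℝ)| * ((2 : ℝ) ^ l)⁻¹ ≤ n + 1 := by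
    have hj' := two_mul_abs_le_of_abs_le_ceil_half hj
    have h2l : (1 : ℝ) ≤ 2 ^ l := one_le_pow₀ (by norm_num)
    rw [← div_eq_mul_inv, div_le_iff₀ (by positivity)]
    push_cast at hj'
    nlinarith
  rw [add_sub_add_left_eq_sub]
  calc |i * ε - j * (ε * ((2 : ℝ) ^ l)⁻¹)| ≤ |i * ε| + |j * (ε * ((2 : ℝ) ^ l)⁻¹)| := abs_sub _ _
    _ = |(i : ℝ)| * ε + |(j : ℝ)| * ((2 : ℝ) ^ l)⁻¹ * ε := by
        simp only [abs_mul, abs_of_nonneg hε, abs_inv, abs_pow, abs_two]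
        ring
    _ ≤ (n + 1) / 2 * ε + (n + 1) / 2 * ε := by gcongr <;> linarith
    _ = (n + 1) * ε := by ring

theorem card_bad_pseudo_admissible_points_le_general
    (P : Polynomial ℝ) (n : ℕ) (hdeg : P.natDegree = n)
    (m ε : ℝ) (hε : 0 < ε) (l : ℕ)
    (i : ℤ) (hi : |i| ≤ ⌈(n : ℚ) / 2⌉) :
    {j : ℤ | |j| ≤ ⌈((n * 2 ^ l : ℕ) : ℚ) / 2⌉ ∧
        |P.eval (m + j * (ε * ((2 : ℝ) ^ l)⁻¹))| <
          ((1 + (n + 1) * 2 ^ l : ℝ) ^ n)⁻¹ * |P.eval (m + i * ε)|}.ncard ≤ 2 * n := by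
  set δ := ε * ((2 : ℝ) ^ l)⁻¹ with hδ_def
  have hδ : 0 < δ := by positivity
  have hKδ : ((n + 1) * 2 ^ l : ℝ) * δ = (n + 1) * ε := by rw [hδ_def]; field_simp
  calc _ ≤ {j : ℤ | ∃ z ∈ (P.aroots ℂ).toFinset, |(j : ℝ) - (z.re - m) / δ| < 1}.ncard := by
        refine Set.ncard_le_ncard ?_ (finite_setOf_exists_abs_sub_lt_one _ _)
        rintro j ⟨hj, hsmall⟩
        by_contra hfar
        have hroots_far : ∀ z ∈ P.aroots ℂ, δ ≤ ‖((m + j * δ : ℝ) : ℂ) - z‖ := fun z hz =>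
          not_lt.mp fun hlt =>
            hfar ⟨z, Multiset.mem_toFinset.mpr hz, abs_sub_div_lt_one_of_norm_sub_lt hδ hlt⟩
        have hlarge := P.abs_eval_le_of_le_norm_sub_aroots (by positivity)
          (hKδ ▸ abs_add_int_mul_sub_add_int_mul_inv_two_pow_le m hε.le hi hj) hroots_far
        rw [hdeg] at hlarge
        rw [inv_mul_eq_div, lt_div_iff₀ (by positivity)] at hsmall
        linarith
    _ ≤ 2 * (P.aroots ℂ).toFinset.card := ncard_setOf_exists_abs_sub_lt_one_le _ _
    _ ≤ 2 * n := by
      gcongr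
      exact (Multiset.toFinset_card_le _).trans_eq (IsAlgClosed.card_aroots_eq_natDegree.trans hdeg)

/-- Deterministic core of the pseudo-admissible point lemma: at most `2n` of the points
`m_j = m + j·ε·2^{-λ}` (`|j| ≤ ⌈n·2^λ/2⌉`) of the refined multipoint satisfy
`|P(m_j)| < (1 + (n+1)·2^λ)^{-n} · |P(m̄)|`, where `m̄ = m + i·ε` is any point of the coarse
multipoint (`|i| ≤ ⌈n/2⌉`). -/
theorem card_bad_pseudo_admissible_points_le
    (P : Polynomial ℝ) (hP : P ≠ 0) (n : ℕ) (hdeg : P.natDegree = n) (hn : 1 ≤ n)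
    (m ε : ℝ) (hε : 0 < ε) (l : ℕ) (hl : 1 ≤ l)
    (i : ℤ) (hi : |i| ≤ ⌈(n : ℚ) / 2⌉) :
    {j : ℤ | |j| ≤ ⌈((n * 2 ^ l : ℕ) : ℚ) / 2⌉ ∧
        |P.eval (m + j * (ε * ((2 : ℝ) ^ l)⁻¹))| <
          ((1 + (n + 1) * 2 ^ l : ℝ) ^ n)⁻¹ * |P.eval (m + i * ε)|}.ncard ≤ 2 * n :=
  card_bad_pseudo_admissible_points_le_general P n hdeg m ε hε l i hi
end

section
/- Let a ≥ 2 and m ≥ 5 be integers, and let P(x) := x^{2m} − (a·x − 1)^2. Then P(1/a) > 0, P(1/a + a^{−m}) < 0, and P(1/a − a^{−m}) < 0. Consequently, P has at least two distinct real roots in the open interval (1/a − a^{−m}, 1/a + a^{−m}); in particular, P has two distinct real roots whose distance is less than 2·a^{−m}. -/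
/-!
Put `u = a⁻¹` and `h = a⁻ᵐ`. Since `a·u = 1`, `P(u) = u^{2m} > 0`, while
`P(u ± h) = (u ± h)^{2m} - (a·h)²`. Both values are negative once `(u + h)^m < a·h`, i.e.
`(1 + a^{1-m})^m < a`; this follows from `(1 + t)^m ≤ exp (m·t)` and
`m·a^{1-m} ≤ 2m / 2^m < log 2`. The intermediate value theorem then yields a root on each
side of `u`.
-/

open Polynomial

lemma Nat.two_mul_lt_two_pow_sub_one {m : ℕ} (hm : 5 ≤ m) : 2 * m < 2 ^ (m - 1) := by
  induction m, hm using Nat.le_induction with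
  | base => norm_num
  | succ k hk ih =>
    have hpow : 2 ^ (k + 1 - 1) = 2 * 2 ^ (k - 1) := by
      rw [← pow_succ']; congr 1; omega
    omega

lemma one_add_pow_lt_two {t : ℝ} (ht : -1 ≤ t) {m : ℕ} (hmt : m * t < Real.log 2) :
    (1 + t) ^ m < 2 :=
  calc (1 + t) ^ m ≤ Real.exp t ^ m :=
        pow_le_pow_left₀ (by linarith) (by linarith [Real.add_one_le_exp t]) m
    _ = Real.exp (m * t) := (Real.exp_nat_mul t m).symm
    _ < Real.exp (Real.log 2) := Real.exp_lt_exp.mpr hmt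
    _ = 2 := Real.exp_log two_pos

lemma one_add_inv_pow_sub_one_pow_lt {A : ℝ} (hA : 2 ≤ A) {m : ℕ} (hm : 5 ≤ m) :
    (1 + (A ^ (m - 1))⁻¹) ^ m < A := by
  have hpow : (2 : ℝ) ^ (m - 1) ≤ A ^ (m - 1) := pow_le_pow_left₀ zero_le_two hA _
  have hnat : (2 * m : ℝ) < 2 ^ (m - 1) := by exact_mod_cast Nat.two_mul_lt_two_pow_sub_one hm
  have hmt : m * (A ^ (m - 1))⁻¹ < Real.log 2 := by
    rw [mul_inv_lt_iff₀ (by positivity)]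
    nlinarith [Real.log_two_gt_d9]
  exact (one_add_pow_lt_two (neg_one_lt_zero.trans_le (by positivity)).le hmt).trans_le hA

lemma inv_add_pow_lt_mul_inv_pow {A : ℝ} (hA : 2 ≤ A) {m : ℕ} (hm : 5 ≤ m) {s : ℝ}
    (hs : |s| ≤ (A ^ m)⁻¹) (hpos : 0 ≤ A⁻¹ + s) : (A⁻¹ + s) ^ m < A * (A ^ m)⁻¹ := by
  have hA0 : 0 < A := by linarith
  have hsplit : A⁻¹ + (A ^ m)⁻¹ = A⁻¹ * (1 + (A ^ (m - 1))⁻¹) := by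
    rw [← Nat.sub_add_cancel (by omega : 1 ≤ m)]
    field_simp
    simp
    ring
  calc (A⁻¹ + s) ^ m ≤ (A⁻¹ + (A ^ m)⁻¹) ^ m :=
        pow_le_pow_left₀ hpos (by linarith [le_abs_self s]) m
    _ = (A ^ m)⁻¹ * (1 + (A ^ (m - 1))⁻¹) ^ m := by rw [hsplit, mul_pow, inv_pow]
    _ < (A ^ m)⁻¹ * A :=
        mul_lt_mul_of_pos_left (one_add_inv_pow_sub_one_pow_lt hA hm) (by positivity)
    _ = A * (A ^ m)⁻¹ := mul_comm _ _

lemma eval_mignotte (A x : ℝ) (m : ℕ) :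
    (X ^ (2 * m) - (C A * X - 1) ^ 2 : ℝ[X]).eval x = (x ^ m) ^ 2 - (A * x - 1) ^ 2 := by
  simp [pow_mul']

lemma eval_mignotte_inv_pos {A : ℝ} (hA : A ≠ 0) (m : ℕ) :
    0 < (X ^ (2 * m) - (C A * X - 1) ^ 2 : ℝ[X]).eval A⁻¹ := by
  rw [eval_mignotte, mul_inv_cancel₀ hA, sub_self, zero_pow two_ne_zero, sub_zero]
  positivity

lemma eval_mignotte_inv_add_neg {A : ℝ} (hA : 2 ≤ A) {m : ℕ} (hm : 5 ≤ m) {s : ℝ}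
    (hs : |s| = (A ^ m)⁻¹) : (X ^ (2 * m) - (C A * X - 1) ^ 2 : ℝ[X]).eval (A⁻¹ + s) < 0 := by
  have hA0 : 0 < A := by linarith
  have hs_le : |s| ≤ A⁻¹ := hs ▸ inv_anti₀ hA0 (le_self_pow₀ (by linarith) (by omega))
  have hpos : 0 ≤ A⁻¹ + s := by linarith [neg_abs_le s]
  have hlt : (A⁻¹ + s) ^ m < |A * s| := by
    rw [abs_mul, abs_of_pos hA0, hs]
    exact inv_add_pow_lt_mul_inv_pow hA hm hs.le hpos
  rw [eval_mignotte, mul_add, mul_inv_cancel₀ hA0.ne', add_sub_cancel_left, sub_neg, sq_lt_sq,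
    abs_of_nonneg (pow_nonneg hpos m)]
  exact hlt

lemma exists_two_roots_of_neg_pos_neg {f : ℝ → ℝ} (hf : Continuous f) {c h : ℝ} (hh : 0 ≤ h)
    (hleft : f (c - h) < 0) (hcenter : 0 < f c) (hright : f (c + h) < 0) :
    ∃ x y : ℝ, x ≠ y ∧ x ∈ Set.Ioo (c - h) (c + h) ∧ y ∈ Set.Ioo (c - h) (c + h) ∧
      f x = 0 ∧ f y = 0 ∧ |x - y| < 2 * h := by
  obtain ⟨x, ⟨hx₁, hx₂⟩, hfx⟩ :=
    intermediate_value_Ioo (by linarith) hf.continuousOn ⟨hleft, hcenter⟩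
  obtain ⟨y, ⟨hy₁, hy₂⟩, hfy⟩ :=
    intermediate_value_Ioo' (by linarith) hf.continuousOn ⟨hright, hcenter⟩
  refine ⟨x, y, hx₂.trans hy₁ |>.ne, ⟨hx₁, by linarith⟩, ⟨by linarith, hy₂⟩, hfx, hfy, ?_⟩
  rw [abs_sub_lt_iff]
  constructor <;> linarith

/-- The Mignotte polynomial `x^{2m} - (a·x - 1)^2` has a cluster of two ill-separated real
roots around `1/a`: it is positive at `1/a` and negative at `1/a ± a^{-m}`, hence has two
distinct real roots at distance less than `2·a^{-m}`. -/
theorem mignotte_cluster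
    (a m : ℕ) (ha : 2 ≤ a) (hm : 5 ≤ m)
    (P : Polynomial ℝ) (hP : P = X ^ (2 * m) - (C (a : ℝ) * X - 1) ^ 2) :
    0 < P.eval ((a : ℝ)⁻¹) ∧
    P.eval ((a : ℝ)⁻¹ + ((a : ℝ) ^ m)⁻¹) < 0 ∧
    P.eval ((a : ℝ)⁻¹ - ((a : ℝ) ^ m)⁻¹) < 0 ∧
    ∃ x y : ℝ, x ≠ y ∧
      x ∈ Set.Ioo ((a : ℝ)⁻¹ - ((a : ℝ) ^ m)⁻¹) ((a : ℝ)⁻¹ + ((a : ℝ) ^ m)⁻¹) ∧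
      y ∈ Set.Ioo ((a : ℝ)⁻¹ - ((a : ℝ) ^ m)⁻¹) ((a : ℝ)⁻¹ + ((a : ℝ) ^ m)⁻¹) ∧
      P.eval x = 0 ∧ P.eval y = 0 ∧ |x - y| < 2 * ((a : ℝ) ^ m)⁻¹ := by
  subst hP
  have hA : (2 : ℝ) ≤ a := by exact_mod_cast ha
  have hcenter := eval_mignotte_inv_pos (by positivity : (a : ℝ) ≠ 0) m
  have hright := eval_mignotte_inv_add_neg hA hm (abs_of_pos (by positivity))
  have hleft := eval_mignotte_inv_add_neg hA hm (s := -((a : ℝ) ^ m)⁻¹)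
    (by rw [abs_neg, abs_of_pos (by positivity)])
  rw [← sub_eq_add_neg] at hleft
  exact ⟨hcenter, hright, hleft, exists_two_roots_of_neg_pos_neg (Polynomial.continuous _)
    (by positivity) hleft hcenter hright⟩
end

section
/- Let a ≥ 2 and m ≥ 7 be integers, and let P(x) := x^{2m} − (a·x² − 1)^2. Set δ := a^{−m/2} (i.e. δ = (√a)^{−m}). Then P(a^{−1/2}) > 0, P(a^{−1/2} + δ) < 0, and P(a^{−1/2} − δ) < 0, where a^{−1/2} = 1/√a. Consequently, P has at least two distinct real roots in the open interval (a^{−1/2} − δ, a^{−1/2} + δ). -/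
open Polynomial

lemma mig_aux (s : ℝ) (h2 : 2 ≤ s^2) (h75 : 7/5 ≤ s) :
    ∀ k : ℕ, ((k:ℝ) + 7) ≤ 7/8 * s^(k+6) := by
  have h1 : (1:ℝ) ≤ s := by linarith
  have h8 : (8:ℝ) ≤ s^6 := by
    have := pow_le_pow_left₀ (show (0:ℝ) ≤ 2 by norm_num) h2 3
    calc (8:ℝ) = 2^3 := by norm_num
    _ ≤ (s^2)^3 := this
    _ = s^6 := by ring
  intro k
  induction k with
  | zero => simpa using by nlinarith
  | succ k ih =>
    have hk : s^6 ≤ s^(k+6) := pow_le_pow_right₀ h1 (by omega)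
    have : s^(k+1+6) = s^(k+6) * s := by rw [← pow_succ]
    rw [this]
    push_cast
    nlinarith

set_option maxHeartbeats 1600000 in
/-- The Mignotte-like polynomial `x^{2m} - (a·x² - 1)^2` has a cluster of two real roots
around the irrational center `1/√a`: with `δ = (√a)^{-m}`, it is positive at `1/√a` and
negative at `1/√a ± δ`, hence has two distinct real roots in `(1/√a - δ, 1/√a + δ)`. -/
theorem mignotte_irrational_cluster
    (a m : ℕ) (ha : 2 ≤ a) (hm : 7 ≤ m)
    (P : Polynomial ℝ) (hP : P = X ^ (2 * m) - (C (a : ℝ) * X ^ 2 - 1) ^ 2)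
    (δ : ℝ) (hδ : δ = (Real.sqrt a ^ m)⁻¹) :
    0 < P.eval ((Real.sqrt a)⁻¹) ∧
    P.eval ((Real.sqrt a)⁻¹ + δ) < 0 ∧
    P.eval ((Real.sqrt a)⁻¹ - δ) < 0 ∧
    ∃ x y : ℝ, x ≠ y ∧
      x ∈ Set.Ioo ((Real.sqrt a)⁻¹ - δ) ((Real.sqrt a)⁻¹ + δ) ∧
      y ∈ Set.Ioo ((Real.sqrt a)⁻¹ - δ) ((Real.sqrt a)⁻¹ + δ) ∧
      P.eval x = 0 ∧ P.eval y = 0 := by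
  have ha2 : (2:ℝ) ≤ (a:ℝ) := by exact_mod_cast ha
  set s := Real.sqrt (a:ℝ) with hsdef
  have hs0 : 0 < s := Real.sqrt_pos.2 (by linarith)
  have hsa : s^2 = a := Real.sq_sqrt (by linarith)
  have h2 : (2:ℝ) ≤ s^2 := by rw [hsa]; exact ha2
  have h75 : (7:ℝ)/5 ≤ s := by nlinarith
  have h1s : (1:ℝ) ≤ s := by linarith
  set r := s⁻¹ with hrdef
  have hr0 : 0 < r := inv_pos.2 hs0
  have hsr : s * r = 1 := mul_inv_cancel₀ hs0.ne'
  have hr2 : r^2 * s^2 = 1 := by nlinarith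
  have hrhalf : r^2 ≤ 1/2 := by nlinarith
  set A := s^(m-1) with hAdef
  have h6A : s^6 ≤ A := pow_le_pow_right₀ h1s (by omega)
  have h8 : (8:ℝ) ≤ A := by
    have := pow_le_pow_left₀ (show (0:ℝ) ≤ 2 by norm_num) h2 3
    calc (8:ℝ) = 2^3 := by norm_num
    _ ≤ (s^2)^3 := this
    _ = s^6 := by ring
    _ ≤ A := h6A
  have hA0 : (0:ℝ) < A := by linarith
  set t := A⁻¹ with htdef
  have ht0 : (0:ℝ) < t := inv_pos.2 hA0
  have hAt : A * t = 1 := mul_inv_cancel₀ hA0.ne'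
  have ht8 : t ≤ 1/8 := by
    rw [htdef]
    rw [show (1:ℝ)/8 = 8⁻¹ by norm_num]
    exact inv_anti₀ (by norm_num) h8
  -- δ = t * r
  have hsm : s^m = A * s := by rw [hAdef, ← pow_succ]; congr 1; omega
  have hδtr : δ = t * r := by rw [hδ, hsm, mul_inv]
  have hδ0 : 0 < δ := by rw [hδtr]; positivity
  -- m * t ≤ 7/8
  have hmA : (m:ℝ) ≤ 7/8 * A := by
    have := mig_aux s h2 h75 (m - 7)
    have e1 : ((m - 7 : ℕ) : ℝ) + 7 = (m:ℝ) := by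
      have : ((m - 7 : ℕ) : ℝ) = (m:ℝ) - 7 := by
        push_cast [Nat.cast_sub (by omega : 7 ≤ m)]; ring
      rw [this]; ring
    have e2 : (m - 7) + 6 = m - 1 := by omega
    rw [e1, e2] at this
    exact this
  have hmt : (m:ℝ) * t ≤ 7/8 := by
    have := mul_le_mul_of_nonneg_right hmA ht0.le
    calc (m:ℝ) * t ≤ 7/8 * A * t := this
    _ = 7/8 * (A * t) := by ring
    _ = 7/8 := by rw [hAt]; ring
  -- (1+t)^(2m) < 8
  have hpow8 : (1+t)^(2*m) < 8 := by
    have h1 : 1 + t ≤ Real.exp t := by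
      have := Real.add_one_le_exp t; linarith
    have h2' : (1+t)^(2*m) ≤ Real.exp t ^ (2*m) :=
      pow_le_pow_left₀ (by positivity) h1 _
    have h3 : Real.exp t ^ (2*m) = Real.exp ((2*m : ℕ) * t) := by
      rw [Real.exp_nat_mul]
    have h4 : Real.exp ((2*m : ℕ) * t) ≤ Real.exp 2 := by
      apply Real.exp_le_exp.2
      push_cast
      linarith [hmt]
    have h5 : Real.exp 2 < 8 := by
      have he := Real.exp_one_lt_d9
      have hp := Real.exp_pos 1
      have : Real.exp 2 = Real.exp 1 * Real.exp 1 := by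
        rw [← Real.exp_add]; norm_num
      rw [this]; nlinarith
    linarith [h2'.trans (h3.le.trans (h4.trans h5.le))]
  -- evaluation
  have heval : ∀ x : ℝ, P.eval x = x^(2*m) - ((a:ℝ)*x^2 - 1)^2 := by
    intro x; simp [hP]
  have har2 : (a:ℝ) * r^2 = 1 := by rw [← hsa]; linarith [hr2]
  have hrm : r^m = δ := by rw [hδ, hrdef, inv_pow]
  have hr2m : r^(2*m) = t^2 * r^2 := by
    rw [mul_comm 2 m, pow_mul, hrm, hδtr]; ring
  -- part 1
  have part1 : 0 < P.eval r := by
    rw [heval, har2]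
    have : (0:ℝ) < r^(2*m) := by positivity
    simpa using this
  -- part 2
  have hx2 : r + δ = r * (1+t) := by rw [hδtr]; ring
  have part2 : P.eval (r + δ) < 0 := by
    rw [heval, hx2, mul_pow]
    have e : (a:ℝ) * (r*(1+t))^2 - 1 = t*(2+t) := by
      linear_combination (1+t)^2 * har2
    rw [e, hr2m]
    have hpow0 : (0:ℝ) < (1+t)^(2*m) := by positivity
    have k1 : r^2 * (1+t)^(2*m) ≤ (1/2) * (1+t)^(2*m) :=
      mul_le_mul_of_nonneg_right hrhalf hpow0.le
    have key : r^2 * (1+t)^(2*m) < 4 := by linarith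
    have k3 : (4:ℝ) ≤ (2+t)^2 := by
      have hexp2 : (2+t)^2 = 4 + 4*t + t^2 := by ring
      linarith [sq_nonneg t]
    have main : t^2*r^2*(1+t)^(2*m) < (t*(2+t))^2 := by
      calc t^2*r^2*(1+t)^(2*m) = t^2*(r^2*(1+t)^(2*m)) := by ring
      _ < t^2*4 := mul_lt_mul_of_pos_left key (by positivity)
      _ ≤ t^2*(2+t)^2 := mul_le_mul_of_nonneg_left k3 (sq_nonneg t)
      _ = (t*(2+t))^2 := by ring
    linarith
  -- part 3
  have hx3 : r - δ = r * (1-t) := by rw [hδtr]; ring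
  have part3 : P.eval (r - δ) < 0 := by
    rw [heval, hx3, mul_pow]
    have e : (a:ℝ) * (r*(1-t))^2 - 1 = t*(t-2) := by
      linear_combination (1-t)^2 * har2
    rw [e, hr2m]
    have hpow1 : (1-t)^(2*m) ≤ 1 := pow_le_one₀ (by linarith) (by linarith)
    have k1 : r^2 * (1-t)^(2*m) ≤ r^2 * 1 :=
      mul_le_mul_of_nonneg_left hpow1 (sq_nonneg r)
    have key : r^2 * (1-t)^(2*m) < (2-t)^2 := by
      have hexp2 : (2-t)^2 = 4 - 4*t + t^2 := by ring
      linarith [sq_nonneg t]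
    have main : t^2*r^2*(1-t)^(2*m) < (t*(t-2))^2 := by
      calc t^2*r^2*(1-t)^(2*m) = t^2*(r^2*(1-t)^(2*m)) := by ring
      _ < t^2*(2-t)^2 := mul_lt_mul_of_pos_left key (by positivity)
      _ = (t*(t-2))^2 := by ring
    linarith
  refine ⟨part1, part2, part3, ?_⟩
  have hcont : Continuous fun x : ℝ => P.eval x := P.continuous
  obtain ⟨x, hxmem, hxval⟩ := intermediate_value_Ioo (by linarith : r - δ ≤ r)
    hcont.continuousOn (Set.mem_Ioo.2 ⟨part3, part1⟩)
  obtain ⟨y, hymem, hyval⟩ := intermediate_value_Ioo' (by linarith : r ≤ r + δ)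
    hcont.continuousOn (Set.mem_Ioo.2 ⟨part2, part1⟩)
  exact ⟨x, y, (hxmem.2.trans hymem.1).ne,
    ⟨hxmem.1, by linarith [hxmem.2]⟩, ⟨by linarith [hymem.1], hymem.2⟩, hxval, hyval⟩
end

section
/- Let P = Σ_{i=0}^n p_i·x^i be a nonzero real polynomial of degree n, let a < b be real numbers, and define the polynomial P_I := Σ_{i=0}^n p_i·(a·X + b)^i·(X + 1)^{n−i}, so that P_I(x) = (x+1)^n · P((a·x+b)/(x+1)) for all x ≠ −1. Then for every ζ ∈ (a, b), the point y := (b − ζ)/(ζ − a) is positive, and the multiplicity of ζ as a root of P equals the multiplicity of y as a root of P_I. Conversely, for every y > 0, the point ζ := (a·y + b)/(y + 1) lies in (a, b), and the multiplicity of y as a root of P_I equals the multiplicity of ζ as a root of P. -/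
open Polynomial

noncomputable def Tdesc (a b : ℝ) (f : Polynomial ℝ) (k : ℕ) : Polynomial ℝ :=
  ∑ i ∈ Finset.range (k + 1), C (f.coeff i) * (C a * X + C b) ^ i * (X + 1) ^ (k - i)

lemma Tdesc_step (a b ζ : ℝ) (R : Polynomial ℝ) (k : ℕ) (hR : R.coeff (k + 1) = 0) :
    Tdesc a b ((X - C ζ) * R) (k + 1)
      = (C a * X + C b - C ζ * (X + 1)) * Tdesc a b R k := by
  have h1 : Tdesc a b ((X - C ζ) * R) (k + 1)
      = (∑ i ∈ Finset.range (k + 2), C ((X * R).coeff i) * (C a * X + C b) ^ i * (X + 1) ^ (k + 1 - i))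
        - ∑ i ∈ Finset.range (k + 2), C ζ * (C (R.coeff i) * (C a * X + C b) ^ i * (X + 1) ^ (k + 1 - i)) := by
    rw [Tdesc, ← Finset.sum_sub_distrib]
    refine Finset.sum_congr rfl fun i _ => ?_
    have h : (X - C ζ) * R = X * R - C ζ * R := by ring
    rw [h, coeff_sub, C_sub, coeff_C_mul, C_mul]
    ring
  have h2 : ∑ i ∈ Finset.range (k + 2), C ((X * R).coeff i) * (C a * X + C b) ^ i * (X + 1) ^ (k + 1 - i)
      = (C a * X + C b) * Tdesc a b R k := by
    rw [Finset.sum_range_succ']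
    simp only [coeff_X_mul]
    rw [mul_coeff_zero, coeff_X_zero, zero_mul, C_0, zero_mul, zero_mul, add_zero,
      Tdesc, Finset.mul_sum]
    refine Finset.sum_congr rfl fun i hi => ?_
    have hik : k + 1 - (i + 1) = k - i := by omega
    rw [hik, pow_succ]
    ring
  have h3 : ∑ i ∈ Finset.range (k + 2), C ζ * (C (R.coeff i) * (C a * X + C b) ^ i * (X + 1) ^ (k + 1 - i))
      = C ζ * (X + 1) * Tdesc a b R k := by
    rw [Finset.sum_range_succ, hR, C_0, zero_mul, zero_mul, mul_zero, add_zero,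
      Tdesc, Finset.mul_sum]
    refine Finset.sum_congr rfl fun i hi => ?_
    rw [Finset.mem_range] at hi
    have h : k + 1 - i = (k - i) + 1 := by omega
    rw [h, pow_succ]
    ring
  rw [h1, h2, h3]; ring

lemma Tdesc_pow (a b ζ : ℝ) (Q : Polynomial ℝ) (d : ℕ) (hQ : Q.natDegree ≤ d) (m : ℕ) :
    Tdesc a b ((X - C ζ) ^ m * Q) (d + m)
      = (C a * X + C b - C ζ * (X + 1)) ^ m * Tdesc a b Q d := by
  induction m with
  | zero => simp
  | succ m ih =>
    have hdeg : ((X - C ζ) ^ m * Q).natDegree < d + m + 1 := by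
      calc ((X - C ζ) ^ m * Q).natDegree
          ≤ ((X - C ζ) ^ m).natDegree + Q.natDegree := natDegree_mul_le
        _ ≤ m + d := by
            have h1 : ((X - C ζ : Polynomial ℝ) ^ m).natDegree = m := by
              rw [natDegree_pow, natDegree_X_sub_C, mul_one]
            omega
        _ < d + m + 1 := by omega
    have hc : ((X - C ζ) ^ m * Q).coeff (d + m + 1) = 0 :=
      coeff_eq_zero_of_natDegree_lt hdeg
    have hmul : (X - C ζ) ^ (m + 1) * Q = (X - C ζ) * ((X - C ζ) ^ m * Q) := by ring
    rw [show d + (m + 1) = (d + m) + 1 from rfl, hmul,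
      Tdesc_step a b ζ _ _ hc, ih, pow_succ]
    ring

lemma Tdesc_eval (a b : ℝ) (f : Polynomial ℝ) (k : ℕ) (hk : f.natDegree ≤ k)
    (y : ℝ) (hy : y + 1 ≠ 0) :
    (Tdesc a b f k).eval y = (y + 1) ^ k * f.eval ((a * y + b) / (y + 1)) := by
  rw [Tdesc, eval_finset_sum, Polynomial.eval_eq_sum_range' (Nat.lt_succ_of_le hk),
    Finset.mul_sum]
  refine Finset.sum_congr rfl fun i hi => ?_
  rw [Finset.mem_range] at hi
  simp only [eval_mul, eval_pow, eval_add, eval_C, eval_X, eval_one]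
  rw [div_pow]
  have h : (y + 1) ^ k = (y + 1) ^ i * (y + 1) ^ (k - i) := by
    rw [← pow_add]; congr 1; omega
  rw [h]
  have hpi : (y + 1) ^ i ≠ 0 := pow_ne_zero _ hy
  field_simp

lemma descartes_forward (P : Polynomial ℝ) (hP : P ≠ 0) (a b : ℝ) (hab : a < b)
    (ζ : ℝ) (hζ : ζ ∈ Set.Ioo a b) :
    rootMultiplicity ζ P
      = rootMultiplicity ((b - ζ) / (ζ - a)) (Tdesc a b P P.natDegree) := by
  obtain ⟨hζa, hζb⟩ := hζ
  have hζa' : ζ - a ≠ 0 := by linarith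
  set y : ℝ := (b - ζ) / (ζ - a) with hy_def
  have hy : 0 < y := div_pos (by linarith) (by linarith)
  have hy1 : y + 1 ≠ 0 := by positivity
  set m := rootMultiplicity ζ P with hm
  obtain ⟨Q, hPQ, hndvd⟩ := P.exists_eq_pow_rootMultiplicity_mul_and_not_dvd hP ζ
  have hQ0 : Q ≠ 0 := by rintro rfl; simp at hPQ; exact hP hPQ
  have hQζ : Q.eval ζ ≠ 0 := fun h => hndvd (dvd_iff_isRoot.mpr h)
  have hdeg : P.natDegree = Q.natDegree + m := by
    rw [hPQ, natDegree_mul (pow_ne_zero _ (X_sub_C_ne_zero ζ)) hQ0, natDegree_pow, natDegree_X_sub_C]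
    ring
  have hyb : y * (ζ - a) = b - ζ := div_mul_cancel₀ _ hζa'
  have hL : (C a * X + C b - C ζ * (X + 1) : Polynomial ℝ)
      = C (a - ζ) * (X - C y) := by
    have hv : (a - ζ) * y = ζ - b := by linear_combination -hyb
    rw [mul_sub, ← C_mul, hv, C_sub, C_sub]
    ring
  have hT : Tdesc a b P P.natDegree
      = C ((a - ζ) ^ m) * ((X - C y) ^ m * Tdesc a b Q Q.natDegree) := by
    rw [show Tdesc a b P P.natDegree = Tdesc a b ((X - C ζ) ^ m * Q) (Q.natDegree + m) by
        rw [← hPQ, ← hdeg],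
      Tdesc_pow a b ζ Q Q.natDegree le_rfl m, hL, mul_pow, C_pow]
    ring
  have hζ' : (a * y + b) / (y + 1) = ζ := by
    rw [div_eq_iff hy1]
    linear_combination -hyb
  have hTQ : (Tdesc a b Q Q.natDegree).eval y ≠ 0 := by
    rw [Tdesc_eval a b Q Q.natDegree le_rfl y hy1, hζ']
    exact mul_ne_zero (pow_ne_zero _ hy1) hQζ
  have hTQ0 : Tdesc a b Q Q.natDegree ≠ 0 := fun h => hTQ (by rw [h]; simp)
  have hC0 : (C ((a - ζ) ^ m) : Polynomial ℝ) ≠ 0 := by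
    simp only [ne_eq, C_eq_zero]
    exact pow_ne_zero _ (sub_ne_zero.mpr (ne_of_lt hζa))
  rw [hT, rootMultiplicity_mul (mul_ne_zero hC0 (mul_ne_zero (pow_ne_zero _ (X_sub_C_ne_zero y)) hTQ0)),
    rootMultiplicity_mul (mul_ne_zero (pow_ne_zero _ (X_sub_C_ne_zero y)) hTQ0),
    rootMultiplicity_C, rootMultiplicity_X_sub_C_pow,
    rootMultiplicity_eq_zero (fun h => hTQ h)]
  omega

/-- The Möbius transformation `x ↦ (ax+b)/(x+1)` carries roots of `P` in `(a,b)` with their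
multiplicities to positive roots of the transformed polynomial
`P_I(X) = Σ p_i (aX+b)^i (X+1)^{n-i}`, and conversely. -/
theorem descartes_transformation_roots
    (P : Polynomial ℝ) (hP : P ≠ 0) (n : ℕ) (hn : P.natDegree = n)
    (a b : ℝ) (hab : a < b)
    (PI : Polynomial ℝ)
    (hPI : PI = ∑ i ∈ Finset.range (n + 1),
      C (P.coeff i) * (C a * X + C b) ^ i * (X + 1) ^ (n - i)) :
    (∀ ζ ∈ Set.Ioo a b,
      0 < (b - ζ) / (ζ - a) ∧
      rootMultiplicity ζ P = rootMultiplicity ((b - ζ) / (ζ - a)) PI) ∧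
    (∀ y : ℝ, 0 < y →
      (a * y + b) / (y + 1) ∈ Set.Ioo a b ∧
      rootMultiplicity y PI = rootMultiplicity ((a * y + b) / (y + 1)) P) := by
  have hPI' : PI = Tdesc a b P P.natDegree := by rw [hPI, Tdesc, hn]
  constructor
  · intro ζ hζ
    refine ⟨div_pos (by linarith [hζ.2]) (by linarith [hζ.1]), ?_⟩
    rw [hPI']
    exact descartes_forward P hP a b hab ζ hζ
  · intro y hy
    have hy1 : (0:ℝ) < y + 1 := by linarith
    have hζa : a < (a * y + b) / (y + 1) := by
      rw [lt_div_iff₀ hy1]; nlinarith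
    have hζb : (a * y + b) / (y + 1) < b := by
      rw [div_lt_iff₀ hy1]; nlinarith
    refine ⟨⟨hζa, hζb⟩, ?_⟩
    set ζ := (a * y + b) / (y + 1) with hζ_def
    have hyζ : (b - ζ) / (ζ - a) = y := by
      have hζa' : ζ - a ≠ 0 := by linarith
      rw [div_eq_iff hζa', hζ_def]
      field_simp
      ring
    have := descartes_forward P hP a b hab ζ ⟨hζa, hζb⟩
    rw [hyζ] at this
    rw [hPI', this]
end

section
/- Let P = Σ_{i=0}^n p_i·x^i be a nonzero real polynomial of degree n, let a < b be real numbers, and define the polynomial P_I := Σ_{i=0}^n p_i·(a·X + b)^i·(X + 1)^{n−i}, so that P_I(x) = (x+1)^n · P((a·x+b)/(x+1)) for all x ≠ −1. If all nonzero coefficients of P_I have the same sign (i.e. the coefficient sequence of P_I has zero sign variations), then P has no root in the open interval (a, b). -/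
open Polynomial

/-- A polynomial with all coefficients nonnegative vanishing at a positive point is zero. -/
lemma nonneg_coeff_eval_pos_zero (q : Polynomial ℝ) (t : ℝ) (ht : 0 < t)
    (hc : ∀ j, 0 ≤ q.coeff j) (he : q.eval t = 0) : q = 0 := by
  ext j
  simp only [coeff_zero]
  by_cases hj : j ≤ q.natDegree
  · have hsum := q.eval_eq_sum_range t
    rw [he] at hsum
    have hterm : ∀ i ∈ Finset.range (q.natDegree + 1), 0 ≤ q.coeff i * t ^ i := by
      intro i _
      exact mul_nonneg (hc i) (pow_nonneg ht.le i)
    have := (Finset.sum_eq_zero_iff_of_nonneg hterm).mp hsum.symm j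
      (Finset.mem_range.mpr (Nat.lt_succ_of_le hj))
    have htj : (0:ℝ) < t ^ j := pow_pos ht j
    nlinarith [this]
  · exact coeff_eq_zero_of_natDegree_lt (lt_of_not_ge hj)

/-- Key evaluation identity for the Möbius-transformed polynomial. -/
lemma PI_eval (P : Polynomial ℝ) (n : ℕ) (hn : P.natDegree = n) (a b : ℝ)
    (PI : Polynomial ℝ)
    (hPI : PI = ∑ i ∈ Finset.range (n + 1),
      C (P.coeff i) * (C a * X + C b) ^ i * (X + 1) ^ (n - i))
    (t : ℝ) (ht : t + 1 ≠ 0) :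
    PI.eval t = (t + 1) ^ n * P.eval ((a * t + b) / (t + 1)) := by
  have hev : P.eval ((a * t + b) / (t + 1)) =
      ∑ i ∈ Finset.range (n + 1), P.coeff i * ((a * t + b) / (t + 1)) ^ i := by
    rw [eval_eq_sum_range, hn]
  rw [hPI, eval_finset_sum, hev, Finset.mul_sum]
  apply Finset.sum_congr rfl
  intro i hi
  have hin : i ≤ n := Nat.lt_succ_iff.mp (Finset.mem_range.mp hi)
  simp only [eval_mul, eval_pow, eval_add, eval_C, eval_X, eval_mul, eval_one]
  rw [div_pow, mul_comm ((t+1)^n), mul_assoc, ← pow_sub_mul_pow (t+1) hin]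
  field_simp

/-- Exclusion predicate of the Descartes method: if all nonzero coefficients of the
transformed polynomial `P_I(X) = Σ p_i (aX+b)^i (X+1)^{n-i}` have the same sign (zero sign
variations), then `P` has no root in the open interval `(a, b)`. -/
theorem descartes_exclusion
    (P : Polynomial ℝ) (hP : P ≠ 0) (n : ℕ) (hn : P.natDegree = n)
    (a b : ℝ) (hab : a < b)
    (PI : Polynomial ℝ)
    (hPI : PI = ∑ i ∈ Finset.range (n + 1),
      C (P.coeff i) * (C a * X + C b) ^ i * (X + 1) ^ (n - i))
    (hsign : (∀ j, 0 ≤ PI.coeff j) ∨ (∀ j, PI.coeff j ≤ 0)) :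
    ∀ x ∈ Set.Ioo a b, P.eval x ≠ 0 := by
  intro x hx hroot
  obtain ⟨hax, hxb⟩ := hx
  -- the parameter t > 0 mapping to x
  set t : ℝ := (b - x) / (x - a) with ht_def
  have hxa : 0 < x - a := by linarith
  have hbx : 0 < b - x := by linarith
  have ht : 0 < t := div_pos hbx hxa
  have ht1 : t + 1 ≠ 0 := by positivity
  have hmap : (a * t + b) / (t + 1) = x := by
    rw [div_eq_iff ht1, ht_def]
    field_simp
    ring
  have hPIt : PI.eval t = 0 := by
    rw [PI_eval P n hn a b PI hPI t ht1, hmap, hroot, mul_zero]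
  -- deduce PI = 0
  have hPI0 : PI = 0 := by
    rcases hsign with hpos | hneg
    · exact nonneg_coeff_eval_pos_zero PI t ht hpos hPIt
    · have : -PI = 0 := by
        apply nonneg_coeff_eval_pos_zero (-PI) t ht
        · intro j; simp only [coeff_neg]; linarith [hneg j]
        · simp [hPIt]
      exact neg_eq_zero.mp this
  -- but PI ≠ 0 since P has a non-root in (a,b)
  have hfin : {y : ℝ | P.IsRoot y}.Finite := Polynomial.finite_setOf_isRoot hP
  have hinf : (Set.Ioo a b).Infinite := Set.Ioo_infinite hab
  obtain ⟨y, hy⟩ := (hinf.diff hfin).nonempty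
  obtain ⟨⟨hay, hyb⟩, hynr⟩ := hy
  have hya : 0 < y - a := by linarith
  have hby : 0 < b - y := by linarith
  set s : ℝ := (b - y) / (y - a) with hs_def
  have hs : 0 < s := div_pos hby hya
  have hs1 : s + 1 ≠ 0 := by positivity
  have hmaps : (a * s + b) / (s + 1) = y := by
    rw [div_eq_iff hs1, hs_def]; field_simp; ring
  have h2 := PI_eval P n hn a b PI hPI s hs1
  rw [hPI0, hmaps] at h2
  simp only [eval_zero] at h2
  have hPy : P.eval y ≠ 0 := hynr
  exact mul_ne_zero (pow_ne_zero n (by positivity)) hPy h2.symm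
end
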